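/- arXiv:1807.05152 — 3 statements merged into one kernel-verified Lean document; each statement's English description precedes it below -/
import Mathlib

section
/- Let s ≥ 1 and for each N ∈ ℕ let N(0), …, N(s) be natural numbers with ∑_{i=0}^{s} N(i) = N. Suppose that for every i, N(i)/N → μ_i ∈ [0,1] as N → ∞. Then (1/N)·ln( N! / (N(0)!·N(1)!·⋯·N(s)!) ) → −∑_{i=0}^{s} μ_i ln μ_i as N → ∞ (with the convention 0·ln 0 = 0). -/
/-!
Write `log n! = n log n - n + R n`. Stirling's bounds give `0 ≤ R n ≤ 1 + log n`, so for
`∑ i, N(i) = N` the logarithm of the multinomial coefficient is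
`N log N - ∑ i, N(i) log N(i) + O(log N) = N ∑ i, negMulLog (N(i) / N) + O(log N)`.
Dividing by `N` and using continuity of `negMulLog x = -x log x` gives the limit.
-/

open Filter Topology Real Finset
open scoped Nat

noncomputable def stirlingRemainder (n : ℕ) : ℝ := log n ! - (n * log n - n)

lemma stirlingRemainder_nonneg (n : ℕ) : 0 ≤ stirlingRemainder n := by
  rcases eq_or_ne n 0 with rfl | hn
  · simp [stirlingRemainder]
  have h2π : 0 ≤ log (2 * π) := log_nonneg (by linarith [pi_gt_three])
  have := Stirling.le_log_factorial_stirling hn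
  unfold stirlingRemainder
  linarith [log_natCast_nonneg n]

lemma stirlingRemainder_le (n : ℕ) : stirlingRemainder n ≤ 1 + log n := by
  rcases eq_or_ne n 0 with rfl | hn
  · simp [stirlingRemainder]
  obtain ⟨m, rfl⟩ := Nat.exists_eq_succ_of_ne_zero hn
  -- `n! / (√(2n) (n/e)^n)` decreases from its value `e / √2` at `n = 1`
  have hanti := Stirling.log_stirlingSeq'_antitone (Nat.zero_le m)
  simp only [Function.comp_apply, Stirling.stirlingSeq_one] at hanti
  rw [Stirling.log_stirlingSeq_formula, log_div (exp_pos 1).ne' (by positivity), log_exp,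
    log_sqrt zero_le_two, log_mul two_ne_zero (by positivity), log_div (by positivity)
    (exp_pos 1).ne', log_exp] at hanti
  unfold stirlingRemainder
  linarith [log_natCast_nonneg (m + 1)]

lemma log_natCast_le_log_natCast {m n : ℕ} (h : m ≤ n) : log m ≤ log n := by
  rcases eq_or_ne m 0 with rfl | hm
  · simpa using log_natCast_nonneg n
  exact log_le_log (by positivity) (by exact_mod_cast h)

lemma natCast_mul_negMulLog_div {k N : ℕ} (h : k ≤ N) :
    (N : ℝ) * negMulLog (k / N) = k * log N - k * log k := by
  rcases eq_or_ne k 0 with rfl | hk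
  · simp
  have hN : N ≠ 0 := by omega
  rw [negMulLog, log_div (by positivity) (by positivity)]
  field_simp
  ring

section Multinomial

variable {ι : Type*} [Fintype ι] {k : ι → ℕ} {N : ℕ}

lemma le_of_sum_eq (hk : ∑ i, k i = N) (i : ι) : k i ≤ N :=
  hk ▸ single_le_sum (fun j _ => Nat.zero_le (k j)) (mem_univ i)

lemma log_factorial_div_prod_factorial (hk : ∑ i, k i = N) :
    log (N ! / ∏ i, ((k i)! : ℝ)) =
      N * ∑ i, negMulLog (k i / N) + (stirlingRemainder N - ∑ i, stirlingRemainder (k i)) := by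
  have hkR : ∑ i, (k i : ℝ) = N := by exact_mod_cast hk
  rw [log_div (by positivity) (by positivity), log_prod (fun i _ => by positivity), mul_sum,
    sum_congr rfl fun i _ => natCast_mul_negMulLog_div (le_of_sum_eq hk i)]
  simp only [stirlingRemainder, sum_sub_distrib, ← sum_mul, hkR]
  ring

lemma abs_stirlingRemainder_sub_sum_le (hle : ∀ i, k i ≤ N) :
    |stirlingRemainder N - ∑ i, stirlingRemainder (k i)| ≤
      (Fintype.card ι + 1) * (1 + log N) := by
  have hlog : 0 ≤ 1 + log N := by linarith [log_natCast_nonneg N]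
  have hsum : ∑ i, stirlingRemainder (k i) ≤ Fintype.card ι * (1 + log N) := by
    simpa [mul_add] using sum_le_sum fun i (_ : i ∈ univ) => (stirlingRemainder_le (k i)).trans
      (add_le_add_right (log_natCast_le_log_natCast (hle i)) 1 : 1 + log (k i) ≤ 1 + log N)
  apply abs_sub_le_of_nonneg_of_le (stirlingRemainder_nonneg N) _
    (sum_nonneg fun i _ => stirlingRemainder_nonneg (k i)) (by nlinarith)
  nlinarith [stirlingRemainder_le N]

end Multinomial

lemma tendsto_stirlingRemainder_sub_sum_div {ι : Type*} [Fintype ι] {k : ℕ → ι → ℕ}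
    (hk : ∀ N, ∑ i, k N i = N) :
    Tendsto (fun N : ℕ => (stirlingRemainder N - ∑ i, stirlingRemainder (k N i)) / N) atTop
      (𝓝 0) := by
  have hlog : Tendsto (fun N : ℕ => (1 + log N) / N) atTop (𝓝 0) := by
    simpa [add_div] using tendsto_one_div_atTop_nhds_zero_nat.add
      (isLittleO_log_id_atTop.tendsto_div_nhds_zero.comp tendsto_natCast_atTop_atTop)
  refine squeeze_zero_norm (fun N => ?_)
    (by simpa [mul_div_assoc] using hlog.const_mul ((Fintype.card ι : ℝ) + 1))
  rw [norm_div, norm_natCast, Real.norm_eq_abs, ← mul_div_assoc]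
  exact div_le_div_of_nonneg_right
    (abs_stirlingRemainder_sub_sum_le (le_of_sum_eq (hk N))) N.cast_nonneg

theorem multinomial_log_asymptotics_general (s : ℕ)
    (k : ℕ → Fin (s + 1) → ℕ) (hsum : ∀ N, ∑ i, k N i = N)
    (μ : Fin (s + 1) → ℝ)
    (hlim : ∀ i, Tendsto (fun N => (k N i : ℝ) / N) atTop (𝓝 (μ i))) :
    Tendsto (fun N : ℕ => (1 / (N : ℝ)) *
        Real.log ((N.factorial : ℝ) / ∏ i, ((k N i).factorial : ℝ)))
      atTop (𝓝 (-∑ i, μ i * Real.log (μ i))) := by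
  have hentropy :
      Tendsto (fun N => ∑ i, negMulLog (k N i / N)) atTop (𝓝 (∑ i, negMulLog (μ i))) :=
    tendsto_finsetSum _ fun i _ => (continuous_negMulLog.tendsto _).comp (hlim i)
  have hlimit : -∑ i, μ i * log (μ i) = ∑ i, negMulLog (μ i) + 0 := by
    simp [negMulLog_eq_neg]
  rw [hlimit]
  refine (hentropy.add (tendsto_stirlingRemainder_sub_sum_div hsum)).congr' ?_
  filter_upwards [eventually_ne_atTop 0] with N hN
  rw [log_factorial_div_prod_factorial (hsum N)]
  field_simp

/-- If `k N i` (for `i = 0,…,s`) sum to `N` and `k N i / N → μ i ∈ [0,1]`,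
then `(1/N) · ln(N! / ∏ᵢ (k N i)!) → −∑ᵢ μ i ln (μ i)` (with `0 · ln 0 = 0`,
which holds by `Real.log 0 = 0`). -/
theorem multinomial_log_asymptotics (s : ℕ) (hs : 1 ≤ s)
    (k : ℕ → Fin (s + 1) → ℕ) (hsum : ∀ N, ∑ i, k N i = N)
    (μ : Fin (s + 1) → ℝ) (hμ : ∀ i, μ i ∈ Set.Icc (0 : ℝ) 1)
    (hlim : ∀ i, Tendsto (fun N => (k N i : ℝ) / N) atTop (𝓝 (μ i))) :
    Tendsto (fun N : ℕ => (1 / (N : ℝ)) *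
        Real.log ((N.factorial : ℝ) / ∏ i, ((k N i).factorial : ℝ)))
      atTop (𝓝 (-∑ i, μ i * Real.log (μ i))) :=
  multinomial_log_asymptotics_general s k hsum μ hlim
end

section
/- Let q > 1 be a real number and s ≥ 1. For each n ∈ ℕ let k_1(n), …, k_s(n) be natural numbers with ∑_{i=1}^{s} k_i(n) = n, and suppose that for each i, k_i(n) → l_i as n → ∞, where l_i ∈ ℕ ∪ {∞}. Then [n; k_1(n),…,k_s(n)]_q / q^{ n² H₂(k_1(n)/n,…,k_s(n)/n) / 2 } → (q^{−1}; q^{−1})_∞^{1−s} · ∏_{i=1}^{s} (q^{−(l_i+1)}; q^{−1})_∞ as n → ∞, with the convention that (q^{−(l_i+1)}; q^{−1})_∞ = 1 when l_i = ∞. -/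
open Filter Topology

/-- The `q`-integer `[n]_q = (qⁿ − 1)/(q − 1)`. -/
noncomputable def qInt (q : ℝ) (n : ℕ) : ℝ := (q ^ n - 1) / (q - 1)

/-- The `q`-factorial `[n]_q! = ∏_{i=1}^n [i]_q`. -/
noncomputable def qFact (q : ℝ) (n : ℕ) : ℝ := ∏ i ∈ Finset.range n, qInt q (i + 1)

/-- The infinite `q`-Pochhammer symbol `(a; x)_∞ = ∏_{i=0}^∞ (1 − a xⁱ)`. -/
noncomputable def qPochInf (a x : ℝ) : ℝ := ∏' i : ℕ, (1 - a * x ^ i)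

/-- `(q^{−(l+1)}; q^{−1})_∞` for `l ∈ ℕ ∪ {∞}`, with the convention that it equals `1`
when `l = ∞`. -/
noncomputable def pochLimit (q : ℝ) (l : ℕ∞) : ℝ :=
  match l with
  | ⊤ => 1
  | (m : ℕ) => qPochInf (q⁻¹ ^ (m + 1)) q⁻¹

/-!
Put `t = q⁻¹`. Each factor of the `q`-factorial is `[i]_q = qⁱ (1 − tⁱ) / (q − 1)`, so
`[m]_q! = q^{m(m+1)/2} (t; t)_m / (q − 1)^m`. Because `∑ kᵢ = n`, the powers of `q − 1` cancel in
the multinomial coefficient and the powers of `q` combine to exactly `q^{n² H₂(k/n) / 2}`: the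
normalized coefficient is `(t; t)_n / ∏ᵢ (t; t)_{kᵢ}`. Now `(t; t)_{kᵢ(n)}` tends to `(t; t)_∞`
if `lᵢ = ∞` and is eventually `(t; t)_m` if `lᵢ = m`, and `(t; t)_∞ = (t; t)_m (t^{m+1}; t)_∞`.
-/

noncomputable def qPochhammer (a x : ℝ) (n : ℕ) : ℝ := ∏ i ∈ Finset.range n, (1 - a * x ^ i)

section Pochhammer

variable {a x : ℝ}

theorem one_sub_mul_pow_pos (hx0 : 0 ≤ x) (hx1 : x < 1) (i : ℕ) : 0 < 1 - x * x ^ i := by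
  rw [← pow_succ']
  linarith [pow_lt_one₀ hx0 hx1 (Nat.add_one_ne_zero i)]

theorem multipliable_one_sub_mul_pow (hx : |x| < 1) :
    Multipliable fun i : ℕ => 1 - a * x ^ i := by
  simpa only [sub_eq_add_neg] using
    Real.multipliable_one_add_of_summable ((summable_geometric_of_abs_lt_one hx).mul_left a).neg

theorem tendsto_qPochhammer_atTop (hx : |x| < 1) :
    Tendsto (qPochhammer a x) atTop (𝓝 (qPochInf a x)) :=
  (multipliable_one_sub_mul_pow hx).hasProd.tendsto_prod_nat

theorem qPochhammer_mul_qPochInf (hx : |x| < 1) (m : ℕ) :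
    qPochhammer a x m * qPochInf (a * x ^ m) x = qPochInf a x := by
  have hshift : ∀ i, 1 - a * x ^ m * x ^ i = 1 - a * x ^ (i + m) := fun i => by ring
  have hmul := multipliable_one_sub_mul_pow (a := a * x ^ m) hx
  simp only [qPochhammer, qPochInf, hshift] at hmul ⊢
  exact hmul.prod_mul_tprod_nat_mul'

theorem qPochInf_pos (hx : |x| < 1) (hpos : ∀ i, 0 < 1 - a * x ^ i) : 0 < qPochInf a x := by
  have hlog : Summable fun i : ℕ => Real.log (1 - a * x ^ i) := by
    simpa only [sub_eq_add_neg] using Real.summable_log_one_add_of_summable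
      ((summable_geometric_of_abs_lt_one hx).mul_left a).neg
  rw [qPochInf, ← Real.rexp_tsum_eq_tprod hpos hlog]
  exact Real.exp_pos _

end Pochhammer

theorem qFact_eq_rpow_mul_qPochhammer {q : ℝ} (hq0 : 0 < q) (hq1 : q ≠ 1) (m : ℕ) :
    qFact q m = q ^ (((m : ℝ) ^ 2 + m) / 2) * qPochhammer q⁻¹ q⁻¹ m / (q - 1) ^ m := by
  have hq1' : q - 1 ≠ 0 := sub_ne_zero.2 hq1
  induction m with
  | zero => simp [qFact, qPochhammer]
  | succ m ih =>
    have hexp : q ^ ((((m + 1 : ℕ) : ℝ) ^ 2 + (m + 1 : ℕ)) / 2)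
        = q ^ (((m : ℝ) ^ 2 + m) / 2) * q ^ (m + 1) := by
      rw [← Real.rpow_natCast q (m + 1), ← Real.rpow_add hq0]
      push_cast
      ring_nf
    have hfact : qFact q (m + 1) = qFact q m * qInt q (m + 1) := Finset.prod_range_succ _ _
    have hpoch : qPochhammer q⁻¹ q⁻¹ (m + 1) = qPochhammer q⁻¹ q⁻¹ m * (1 - q⁻¹ * q⁻¹ ^ m) :=
      Finset.prod_range_succ _ _
    rw [hfact, hpoch, ih, hexp, qInt, inv_pow]
    field_simp
    ring

theorem qMultinomial_div_rpow_eq {ι : Type*} [Fintype ι] {q : ℝ} (hq0 : 0 < q) (hq1 : q ≠ 1)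
    (k : ι → ℕ) {n : ℕ} (hn : n ≠ 0) (hsum : ∑ i, k i = n) :
    (qFact q n / ∏ i, qFact q (k i)) / q ^ ((n : ℝ) ^ 2 * (1 - ∑ i, ((k i : ℝ) / n) ^ 2) / 2)
      = qPochhammer q⁻¹ q⁻¹ n / ∏ i, qPochhammer q⁻¹ q⁻¹ (k i) := by
  have hn' : (n : ℝ) ≠ 0 := Nat.cast_ne_zero.2 hn
  have hexp : (n : ℝ) ^ 2 * (1 - ∑ i, ((k i : ℝ) / n) ^ 2) / 2
      = ((n : ℝ) ^ 2 + n) / 2 - ∑ i, (((k i : ℝ) ^ 2 + k i) / 2) := by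
    have hks : ∑ i, (k i : ℝ) = n := by exact_mod_cast hsum
    simp only [div_pow, ← Finset.sum_div, Finset.sum_add_distrib, hks]
    field_simp
    ring
  have hpow : (q - 1) ^ n = ∏ i, (q - 1) ^ k i := by rw [Finset.prod_pow_eq_pow_sum, hsum]
  rw [hexp, Real.rpow_sub hq0, Real.rpow_sum_of_pos hq0, qFact_eq_rpow_mul_qPochhammer hq0 hq1,
    Finset.prod_congr rfl fun i _ => qFact_eq_rpow_mul_qPochhammer hq0 hq1 (k i), hpow,
    Finset.prod_div_distrib, Finset.prod_mul_distrib]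
  have hq1k : ∏ i, (q - 1) ^ k i ≠ 0 :=
    Finset.prod_ne_zero_iff.2 fun i _ => pow_ne_zero _ (sub_ne_zero.2 hq1)
  have hqk : ∏ i, q ^ (((k i : ℝ) ^ 2 + k i) / 2) ≠ 0 :=
    Finset.prod_ne_zero_iff.2 fun i _ => (Real.rpow_pos_of_pos hq0 _).ne'
  field_simp

theorem tendsto_atTop_of_tendsto_natCast_nhds_top {α : Type*} {F : Filter α} {k : α → ℕ}
    (hk : Tendsto (fun n => (k n : ℕ∞)) F (𝓝 ⊤)) : Tendsto k F atTop :=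
  tendsto_atTop.2 fun m =>
    (ENat.tendsto_nhds_top_iff_natCast_lt.1 hk m).mono fun _ hn => by exact_mod_cast hn.le

theorem eventually_eq_of_tendsto_natCast_nhds_natCast {α : Type*} {F : Filter α} {k : α → ℕ}
    {m : ℕ} (hk : Tendsto (fun n => (k n : ℕ∞)) F (𝓝 m)) : ∀ᶠ n in F, k n = m := by
  rw [ENat.nhds_eq_pure (ENat.natCast_ne_top m), tendsto_pure] at hk
  exact hk.mono fun _ hn => by exact_mod_cast hn

theorem abs_inv_lt_one_of_one_lt {q : ℝ} (hq : 1 < q) : |q⁻¹| < 1 := by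
  rw [abs_inv, abs_of_pos (by linarith)]
  exact inv_lt_one_of_one_lt₀ hq

theorem pochLimit_natCast (q : ℝ) (m : ℕ) : pochLimit q m = qPochInf (q⁻¹ ^ (m + 1)) q⁻¹ := rfl

theorem pochLimit_pos {q : ℝ} (hq : 1 < q) (l : ℕ∞) : 0 < pochLimit q l := by
  have ht0 : 0 ≤ q⁻¹ := inv_nonneg.2 (by linarith)
  cases l with
  | top => exact one_pos
  | coe m =>
    rw [pochLimit_natCast]
    refine qPochInf_pos (abs_inv_lt_one_of_one_lt hq) fun i => ?_
    rw [← pow_add]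
    linarith [pow_lt_one₀ ht0 (inv_lt_one_of_one_lt₀ hq) (by omega : m + 1 + i ≠ 0)]

theorem tendsto_qPochhammer_of_tendsto_natCast {q : ℝ} (hq : 1 < q) {α : Type*} {F : Filter α}
    {k : α → ℕ} {l : ℕ∞} (hk : Tendsto (fun n => (k n : ℕ∞)) F (𝓝 l)) :
    Tendsto (fun n => qPochhammer q⁻¹ q⁻¹ (k n)) F (𝓝 (qPochInf q⁻¹ q⁻¹ / pochLimit q l)) := by
  cases l with
  | top =>
    rw [show pochLimit q ⊤ = 1 from rfl, div_one]
    exact (tendsto_qPochhammer_atTop (abs_inv_lt_one_of_one_lt hq)).comp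
      (tendsto_atTop_of_tendsto_natCast_nhds_top hk)
  | coe m =>
    have hlim : qPochInf q⁻¹ q⁻¹ / pochLimit q m = qPochhammer q⁻¹ q⁻¹ m := by
      rw [eq_comm, eq_div_iff (pochLimit_pos hq m).ne', pochLimit_natCast, pow_succ',
        qPochhammer_mul_qPochInf (abs_inv_lt_one_of_one_lt hq)]
    rw [hlim]
    exact tendsto_const_nhds.congr'
      ((eventually_eq_of_tendsto_natCast_nhds_natCast hk).mono fun _ hn =>
        congrArg (qPochhammer q⁻¹ q⁻¹) hn.symm)

theorem qMultinomial_asymptotics_general (q : ℝ) (hq : 1 < q) (s : ℕ)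
    (k : ℕ → Fin s → ℕ) (hsum : ∀ n, ∑ i, k n i = n)
    (l : Fin s → ℕ∞)
    (hl : ∀ i, Tendsto (fun n => (k n i : ℕ∞)) atTop (𝓝 (l i))) :
    Tendsto (fun n : ℕ =>
        (qFact q n / ∏ i, qFact q (k n i)) /
          q ^ ((n : ℝ) ^ 2 * (1 - ∑ i, ((k n i : ℝ) / n) ^ 2) / 2))
      atTop
      (𝓝 (qPochInf q⁻¹ q⁻¹ ^ ((1 : ℤ) - s) * ∏ i, pochLimit q (l i))) := by
  set P := qPochInf q⁻¹ q⁻¹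
  have hP : P ≠ 0 := (qPochInf_pos (abs_inv_lt_one_of_one_lt hq)
    (one_sub_mul_pow_pos (inv_nonneg.2 (by linarith)) (inv_lt_one_of_one_lt₀ hq))).ne'
  have hlim : Tendsto (fun n => qPochhammer q⁻¹ q⁻¹ n / ∏ i, qPochhammer q⁻¹ q⁻¹ (k n i)) atTop
      (𝓝 (P / ∏ i, (P / pochLimit q (l i)))) :=
    (tendsto_qPochhammer_atTop (abs_inv_lt_one_of_one_lt hq)).div
      (tendsto_finsetProd _ fun i _ => tendsto_qPochhammer_of_tendsto_natCast hq (hl i))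
      (Finset.prod_ne_zero_iff.2 fun i _ => div_ne_zero hP (pochLimit_pos hq _).ne')
  have hval : P / ∏ i, (P / pochLimit q (l i)) = P ^ ((1 : ℤ) - s) * ∏ i, pochLimit q (l i) := by
    rw [Finset.prod_div_distrib, Finset.prod_const, Finset.card_univ, Fintype.card_fin,
      zpow_sub₀ hP, zpow_one, zpow_natCast]
    field_simp
  rw [← hval]
  refine hlim.congr' ((eventually_ne_atTop 0).mono fun n hn => ?_)
  exact (qMultinomial_div_rpow_eq (by linarith) hq.ne' (k n) hn (hsum n)).symm

/-- Asymptotics of the `q`-multinomial coefficients: if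
`k₁(n) + ⋯ + k_s(n) = n` and `kᵢ(n) → lᵢ ∈ ℕ ∪ {∞}`, then
`[n; k₁(n),…,k_s(n)]_q / q^{n² H₂(k₁(n)/n,…,k_s(n)/n)/2}
  → (q⁻¹; q⁻¹)_∞^{1−s} · ∏ᵢ (q^{−(lᵢ+1)}; q⁻¹)_∞`. -/
theorem qMultinomial_asymptotics (q : ℝ) (hq : 1 < q) (s : ℕ) (hs : 1 ≤ s)
    (k : ℕ → Fin s → ℕ) (hsum : ∀ n, ∑ i, k n i = n)
    (l : Fin s → ℕ∞)
    (hl : ∀ i, Tendsto (fun n => (k n i : ℕ∞)) atTop (𝓝 (l i))) :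
    Tendsto (fun n : ℕ =>
        (qFact q n / ∏ i, qFact q (k n i)) /
          q ^ ((n : ℝ) ^ 2 * (1 - ∑ i, ((k n i : ℝ) / n) ^ 2) / 2))
      atTop
      (𝓝 (qPochInf q⁻¹ q⁻¹ ^ ((1 : ℤ) - s) * ∏ i, pochLimit q (l i))) :=
  qMultinomial_asymptotics_general q hq s k hsum l hl
end

section
/- Let q > 1 be a real number and s ≥ 1. For each n let k_1(n), …, k_s(n) be natural numbers with ∑_{i=1}^{s} k_i(n) = n, and suppose k_i(n)/n → μ_i ∈ [0,1] as n → ∞ for each i. Then (2/n²) · log_q [n; k_1(n),…,k_s(n)]_q → H₂(μ_1,…,μ_s) = 1 − ∑_{i=1}^{s} μ_i² as n → ∞. -/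
open Filter Topology

/-!
Writing `[i]_q = q^i (1 - q^{-i}) / (q - 1)` gives
`log [n]_q! = n(n+1)/2 · log q - n log (q - 1) + log (q⁻¹; q⁻¹)_n`, and the last term stays
bounded since `|log (1 - y)| ≤ y / (1 - y)` is summable along `y = q^{-i}`. In
`log_q [n; k₁,…,k_s]_q` with `∑ kᵢ = n` the linear terms cancel, leaving
`(n² - ∑ kᵢ²)/2 + O(1)`; dividing by `n²/2` gives `1 - ∑ (kᵢ/n)² + O(1/n²)`.
-/

open Finset

/-- `log (x; x)_n`, the logarithm of a `q`-Pochhammer symbol. -/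
noncomputable def logQPochhammer (x : ℝ) (n : ℕ) : ℝ :=
  ∑ i ∈ range n, Real.log (1 - x ^ (i + 1))

lemma abs_log_one_sub_le {y : ℝ} (hy0 : 0 ≤ y) (hy1 : y < 1) :
    |Real.log (1 - y)| ≤ y / (1 - y) := by
  have hpos : 0 < 1 - y := by linarith
  have hlower : 1 - (1 - y)⁻¹ ≤ Real.log (1 - y) := Real.one_sub_inv_le_log_of_pos hpos
  have hnonpos : Real.log (1 - y) ≤ 0 := Real.log_nonpos hpos.le (by linarith)
  have hy : 1 - (1 - y)⁻¹ = -(y / (1 - y)) := by field_simp; ring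
  rw [abs_of_nonpos hnonpos]
  linarith

lemma abs_logQPochhammer_le {x : ℝ} (hx0 : 0 ≤ x) (hx1 : x < 1) (n : ℕ) :
    |logQPochhammer x n| ≤ x / (1 - x) ^ 2 := by
  have hpos : 0 < 1 - x := by linarith
  have hterm : ∀ i : ℕ, |Real.log (1 - x ^ (i + 1))| ≤ x / (1 - x) * x ^ i := by
    intro i
    have hxi : x ^ (i + 1) ≤ x := pow_le_of_le_one hx0 hx1.le i.succ_ne_zero
    calc |Real.log (1 - x ^ (i + 1))| ≤ x ^ (i + 1) / (1 - x ^ (i + 1)) :=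
          abs_log_one_sub_le (by positivity) (lt_of_le_of_lt hxi hx1)
      _ ≤ x ^ (i + 1) / (1 - x) := div_le_div_of_nonneg_left (by positivity) hpos (by linarith)
      _ = x / (1 - x) * x ^ i := by ring
  have hgeom : ∑ i ∈ range n, x ^ i ≤ 1 / (1 - x) := by
    have := geom_sum_Ico_le_of_lt_one (m := 0) (n := n) hx0 hx1
    rwa [← range_eq_Ico, pow_zero] at this
  calc |logQPochhammer x n| ≤ ∑ i ∈ range n, x / (1 - x) * x ^ i :=
        (abs_sum_le_sum_abs _ _).trans (sum_le_sum fun i _ => hterm i)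
    _ = x / (1 - x) * ∑ i ∈ range n, x ^ i := (mul_sum _ _ _).symm
    _ ≤ x / (1 - x) * (1 / (1 - x)) := by gcongr
    _ = x / (1 - x) ^ 2 := by rw [div_mul_div_comm, mul_one, sq]

lemma qInt_succ_pos {q : ℝ} (hq : 1 < q) (n : ℕ) : 0 < qInt q (n + 1) :=
  div_pos (sub_pos.2 (one_lt_pow₀ hq n.succ_ne_zero)) (sub_pos.2 hq)

lemma qFact_pos {q : ℝ} (hq : 1 < q) (n : ℕ) : 0 < qFact q n :=
  prod_pos fun i _ => qInt_succ_pos hq i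

lemma log_qInt_succ {q : ℝ} (hq : 1 < q) (n : ℕ) :
    Real.log (qInt q (n + 1)) =
      (n + 1) * Real.log q - Real.log (q - 1) + Real.log (1 - q⁻¹ ^ (n + 1)) := by
  have hq0 : 0 < q := by linarith
  have hsmall : q⁻¹ ^ (n + 1) < 1 := pow_lt_one₀ (by positivity) (inv_lt_one_of_one_lt₀ hq)
    n.succ_ne_zero
  have hfactor : qInt q (n + 1) = q ^ (n + 1) * (1 - q⁻¹ ^ (n + 1)) / (q - 1) := by
    rw [qInt, inv_pow, mul_sub, mul_inv_cancel₀ (by positivity), mul_one]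
  rw [hfactor, Real.log_div (by have := sub_pos.2 hsmall; positivity) (by linarith),
    Real.log_mul (by positivity) (by linarith), Real.log_pow]
  push_cast
  ring

lemma log_qFact {q : ℝ} (hq : 1 < q) (n : ℕ) :
    Real.log (qFact q n) =
      n * (n + 1) / 2 * Real.log q - n * Real.log (q - 1) + logQPochhammer q⁻¹ n := by
  have hgauss : ∑ i ∈ range n, ((i : ℝ) + 1) = n * (n + 1) / 2 := by
    induction n with
    | zero => simp
    | succ n ih => rw [sum_range_succ, ih]; push_cast; ring
  rw [qFact, Real.log_prod fun i _ => (qInt_succ_pos hq i).ne',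
    sum_congr rfl fun i _ => log_qInt_succ hq i, logQPochhammer, sum_add_distrib,
    sum_sub_distrib, ← sum_mul, hgauss, sum_const, card_range, nsmul_eq_mul]

lemma log_qMultinomial {ι : Type*} [Fintype ι] {q : ℝ} (hq : 1 < q) {k : ι → ℕ} {n : ℕ}
    (hk : ∑ i, k i = n) :
    Real.log (qFact q n / ∏ i, qFact q (k i)) =
      (n ^ 2 - ∑ i, (k i : ℝ) ^ 2) / 2 * Real.log q +
        (logQPochhammer q⁻¹ n - ∑ i, logQPochhammer q⁻¹ (k i)) := by
  have hkR : ∑ i, (k i : ℝ) = n := by exact_mod_cast hk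
  have hfactor : ∀ i ∈ (univ : Finset ι), Real.log (qFact q (k i)) =
      (k i : ℝ) ^ 2 * (Real.log q / 2) + k i * (Real.log q / 2 - Real.log (q - 1)) +
        logQPochhammer q⁻¹ (k i) := fun i _ => by
    rw [log_qFact hq]; ring
  rw [Real.log_div (qFact_pos hq n).ne' (prod_pos fun i _ => qFact_pos hq (k i)).ne',
    Real.log_prod fun i _ => (qFact_pos hq (k i)).ne', sum_congr rfl hfactor,
    sum_add_distrib, sum_add_distrib, ← sum_mul, ← sum_mul, hkR, log_qFact hq]
  ring

lemma abs_log_qMultinomial_sub_le {ι : Type*} [Fintype ι] {q : ℝ} (hq : 1 < q) {k : ι → ℕ}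
    {n : ℕ} (hk : ∑ i, k i = n) :
    |Real.log (qFact q n / ∏ i, qFact q (k i)) / Real.log q -
        (n ^ 2 - ∑ i, (k i : ℝ) ^ 2) / 2| ≤
      (Fintype.card ι + 1) * (q⁻¹ / (1 - q⁻¹) ^ 2) / Real.log q := by
  have hlogq : 0 < Real.log q := Real.log_pos hq
  have hx0 : 0 ≤ q⁻¹ := by positivity
  have hx1 : q⁻¹ < 1 := inv_lt_one_of_one_lt₀ hq
  set C := q⁻¹ / (1 - q⁻¹) ^ 2
  have hrem : |logQPochhammer q⁻¹ n - ∑ i, logQPochhammer q⁻¹ (k i)| ≤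
      (Fintype.card ι + 1) * C :=
    calc |logQPochhammer q⁻¹ n - ∑ i, logQPochhammer q⁻¹ (k i)|
        ≤ |logQPochhammer q⁻¹ n| + ∑ i, |logQPochhammer q⁻¹ (k i)| :=
          (abs_sub _ _).trans (add_le_add_right (abs_sum_le_sum_abs _ _) _)
      _ ≤ C + ∑ _i : ι, C := by
          gcongr with i <;> exact abs_logQPochhammer_le hx0 hx1 _
      _ = (Fintype.card ι + 1) * C := by simp [card_univ]; ring
  rw [log_qMultinomial hq hk, add_div, mul_div_cancel_right₀ _ hlogq.ne', add_sub_cancel_left,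
    abs_div, abs_of_pos hlogq]
  gcongr

theorem qMultinomial_log_asymptotics_general (q : ℝ) (hq : 1 < q) (s : ℕ)
    (k : ℕ → Fin s → ℕ) (hsum : ∀ n, ∑ i, k n i = n)
    (μ : Fin s → ℝ)
    (hlim : ∀ i, Tendsto (fun n => (k n i : ℝ) / n) atTop (𝓝 (μ i))) :
    Tendsto (fun n : ℕ =>
        2 / (n : ℝ) ^ 2 *
          (Real.log (qFact q n / ∏ i, qFact q (k n i)) / Real.log q))
      atTop (𝓝 (1 - ∑ i, μ i ^ 2)) := by
  set err : ℕ → ℝ := fun n => Real.log (qFact q n / ∏ i, qFact q (k n i)) / Real.log q -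
    (n ^ 2 - ∑ i, (k n i : ℝ) ^ 2) / 2
  have hsplit : ∀ n : ℕ, 1 ≤ n →
      1 - ∑ i, ((k n i : ℝ) / n) ^ 2 + 2 / (n : ℝ) ^ 2 * err n =
        2 / (n : ℝ) ^ 2 * (Real.log (qFact q n / ∏ i, qFact q (k n i)) / Real.log q) := by
    intro n hn
    have hn0 : (n : ℝ) ≠ 0 := Nat.cast_ne_zero.2 (by omega)
    simp only [err, div_pow, ← sum_div]
    field_simp
    ring
  have hquad : Tendsto (fun n : ℕ => 1 - ∑ i, ((k n i : ℝ) / n) ^ 2) atTop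
      (𝓝 (1 - ∑ i, μ i ^ 2)) :=
    tendsto_const_nhds.sub (tendsto_finsetSum _ fun i _ => (hlim i).pow 2)
  have herr_bdd : IsBoundedUnder (· ≤ ·) atTop (norm ∘ err) :=
    isBoundedUnder_of ⟨_, fun n => abs_log_qMultinomial_sub_le hq (hsum n)⟩
  have hscale : Tendsto (fun n : ℕ => 2 / (n : ℝ) ^ 2) atTop (𝓝 0) :=
    tendsto_const_nhds.div_atTop
      ((tendsto_pow_atTop two_ne_zero).comp tendsto_natCast_atTop_atTop)
  simpa using (hquad.add (hscale.zero_mul_isBoundedUnder_le herr_bdd)).congr'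
    (eventually_atTop.2 ⟨1, hsplit⟩)

/-- If `k₁(n) + ⋯ + k_s(n) = n` and `kᵢ(n)/n → μᵢ ∈ [0,1]`, then
`(2/n²) log_q [n; k₁(n),…,k_s(n)]_q → H₂(μ₁,…,μ_s) = 1 − ∑ᵢ μᵢ²`. -/
theorem qMultinomial_log_asymptotics (q : ℝ) (hq : 1 < q) (s : ℕ) (hs : 1 ≤ s)
    (k : ℕ → Fin s → ℕ) (hsum : ∀ n, ∑ i, k n i = n)
    (μ : Fin s → ℝ) (hμ : ∀ i, μ i ∈ Set.Icc (0 : ℝ) 1)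
    (hlim : ∀ i, Tendsto (fun n => (k n i : ℝ) / n) atTop (𝓝 (μ i))) :
    Tendsto (fun n : ℕ =>
        2 / (n : ℝ) ^ 2 *
          (Real.log (qFact q n / ∏ i, qFact q (k n i)) / Real.log q))
      atTop (𝓝 (1 - ∑ i, μ i ^ 2)) :=
  qMultinomial_log_asymptotics_general q hq s k hsum μ hlim
end
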